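/- Let a > 0 and let f : ℝ → ℂ be a Schwartz function. Then for every z ∈ ℂ, [B_{a/2}( a·x·f′(x) )](z) = (B_{a/2}f)″(z) − (a²z²/4)·(B_{a/2}f)(z) − (a/2)·(B_{a/2}f)(z); that is, the Bargmann transform intertwines the real Euler operator e_x^a = a·x·∂/∂x with the complex harmonic oscillator H_z^a = ∂²/∂z² − a²z²/4 − a/2. -/

import Mathlib

open Complex Real SchwartzMap

/-- The (parametrized) Bargmann transform `B_{a/2}`:
`(B_{a/2}f)(z) = (a/π)^{1/4} ∫_ℝ f(x) e^{axz − (a/2)x² − (a/4)z²} dx`. -/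
noncomputable def bargmann (a : ℝ) (f : ℝ → ℂ) (z : ℂ) : ℂ :=
  ((a / Real.pi) ^ ((1 : ℝ) / 4) : ℝ) *
    ∫ x : ℝ, f x * Complex.exp (a * x * z - (a / 2) * x ^ 2 - (a / 4) * z ^ 2)

/-!
Write `K(x, z) = exp(axz − ax²/2 − az²/4)` for the kernel. Since `Re` of the exponent is
`−a(x − Re z)²/2 + a|z|²/4`, the kernel is bounded in `x`, locally uniformly in `z`, so for
Schwartz `f` every `∫ xᵏ f(x) K(x, z) dx` converges and may be differentiated under the integral
sign. As `∂_z K = (ax − az/2) K`, the operator `∂_z² − a²z²/4 − a/2` acts on `B f` by multiplying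
`f` with `(ax − az/2)² − a/2 − a²z²/4 − a/2 = a²x² − a²xz − a`. On the other side, integrating by
parts and using `∂_x (x K) = (1 + x(az − ax)) K` turns `a x f'` into the same multiplier.
-/

open MeasureTheory

theorem SchwartzMap.integrable_ofReal_pow_mul (f : 𝓢(ℝ, ℂ)) (k : ℕ) :
    Integrable fun x : ℝ => (x : ℂ) ^ k * f x :=
  (f.integrable_pow_mul volume k).mono (by fun_prop) (ae_of_all _ fun x => by simp)

namespace Bargmann

noncomputable def kernel (a x : ℝ) (z : ℂ) : ℂ :=
  cexp (a * x * z - a / 2 * x ^ 2 - a / 4 * z ^ 2)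

@[fun_prop]
lemma continuous_kernel (a : ℝ) (z : ℂ) : Continuous fun x : ℝ => kernel a x z := by
  unfold kernel; fun_prop

lemma hasDerivAt_kernel (a x : ℝ) (z : ℂ) :
    HasDerivAt (kernel a x) ((a * x - a / 2 * z) * kernel a x z) z := by
  have hexp : HasDerivAt (fun w : ℂ => a * x * w - a / 2 * x ^ 2 - a / 4 * w ^ 2)
      (a * x - a / 2 * z) z := by
    refine ((((hasDerivAt_id z).const_mul ((a : ℂ) * x)).sub_const ((a : ℂ) / 2 * x ^ 2)).sub
      ((hasDerivAt_pow 2 z).const_mul ((a : ℂ) / 4))).congr_deriv ?_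
    ring
  exact hexp.cexp.congr_deriv (mul_comm _ _)

lemma hasDerivAt_kernel_left (a x : ℝ) (z : ℂ) :
    HasDerivAt (fun y : ℝ => kernel a y z) ((a * z - a * x) * kernel a x z) x := by
  have hexp : HasDerivAt (fun y : ℂ => a * y * z - a / 2 * y ^ 2 - a / 4 * z ^ 2)
      (a * z - a * x) x := by
    refine ((((hasDerivAt_id (x : ℂ)).const_mul (a : ℂ)).mul_const z).sub
      ((hasDerivAt_pow 2 (x : ℂ)).const_mul ((a : ℂ) / 2))).sub_const _ |>.congr_deriv ?_
    ring
  exact hexp.cexp.comp_ofReal.congr_deriv (mul_comm _ _)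

variable {a : ℝ}

lemma norm_kernel_le (ha : 0 ≤ a) (x : ℝ) (z : ℂ) :
    ‖kernel a x z‖ ≤ Real.exp (a / 4 * ‖z‖ ^ 2) := by
  rw [kernel, Complex.norm_exp, Complex.sq_norm, Complex.normSq_apply]
  refine Real.exp_le_exp.2 ?_
  simp only [sub_re, mul_re, ofReal_re, ofReal_im, div_re, div_im, pow_two]
  norm_num
  nlinarith [mul_nonneg ha (sq_nonneg (x - z.re))]

lemma integrable_mul_kernel (ha : 0 ≤ a) {g : ℝ → ℂ} (hg : Integrable g) (z : ℂ) :
    Integrable fun x => g x * kernel a x z :=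
  hg.mul_bdd (by fun_prop) (ae_of_all _ fun x => norm_kernel_le ha x z)

noncomputable def transform (a : ℝ) (g : ℝ → ℂ) (z : ℂ) : ℂ :=
  ∫ x, g x * kernel a x z

lemma hasDerivAt_transform (ha : 0 ≤ a) {g : ℝ → ℂ} (hg : Integrable g)
    (hxg : Integrable fun x : ℝ => (x : ℂ) * g x) (z : ℂ) :
    HasDerivAt (transform a g)
      (a * transform a (fun x => x * g x) z - a / 2 * z * transform a g z) z := by
  set R := ‖z‖ + 1
  have hbound : ∀ x : ℝ, ∀ w ∈ Metric.ball z 1,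
      ‖g x * ((a * x - a / 2 * w) * kernel a x w)‖ ≤
        (a * ‖(x : ℂ) * g x‖ + a / 2 * R * ‖g x‖) * Real.exp (a / 4 * R ^ 2) := by
    intro x w hw
    have hwR : ‖w‖ ≤ R := by
      have := norm_le_norm_add_norm_sub' w z
      rw [← dist_eq_norm] at this
      linarith [Metric.mem_ball.1 hw]
    have hK : ‖kernel a x w‖ ≤ Real.exp (a / 4 * R ^ 2) :=
      (norm_kernel_le ha x w).trans (Real.exp_le_exp.2 (by gcongr))
    have hlin : ‖g x * (a * x - a / 2 * w)‖ ≤ a * ‖(x : ℂ) * g x‖ + a / 2 * R * ‖g x‖ := by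
      calc ‖g x * (a * x - a / 2 * w)‖ = ‖(a : ℂ) * (x * g x) - (a / 2 * w : ℂ) * g x‖ := by
            ring_nf
        _ ≤ ‖(a : ℂ) * (x * g x)‖ + ‖(a / 2 * w : ℂ) * g x‖ := norm_sub_le _ _
        _ = a * ‖(x : ℂ) * g x‖ + a / 2 * ‖w‖ * ‖g x‖ := by
            simp [abs_of_nonneg ha]
        _ ≤ a * ‖(x : ℂ) * g x‖ + a / 2 * R * ‖g x‖ := by gcongr
    rw [← mul_assoc, norm_mul]
    exact mul_le_mul hlin hK (norm_nonneg _) (by positivity)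
  have hderiv := hasDerivAt_integral_of_dominated_loc_of_deriv_le (Metric.ball_mem_nhds z one_pos)
    (F := fun w x => g x * kernel a x w)
    (F' := fun w x => g x * ((a * x - a / 2 * w) * kernel a x w))
    (.of_forall fun w => (integrable_mul_kernel ha hg w).aestronglyMeasurable)
    (integrable_mul_kernel ha hg z)
    (hg.aestronglyMeasurable.mul (by fun_prop)) (ae_of_all _ hbound)
    (((hxg.norm.const_mul a).add (hg.norm.const_mul (a / 2 * R))).mul_const _)
    (ae_of_all _ fun x w _ => (hasDerivAt_kernel a x w).const_mul (g x))
  refine hderiv.2.congr_deriv ?_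
  unfold transform
  rw [← integral_const_mul, ← integral_const_mul, ← integral_sub]
  · congr 1; ext x; ring
  · exact (integrable_mul_kernel ha hxg z).const_mul _
  · exact (integrable_mul_kernel ha hg z).const_mul _

noncomputable def momentTransform (a : ℝ) (f : 𝓢(ℝ, ℂ)) (k : ℕ) : ℂ → ℂ :=
  transform a fun x => (x : ℂ) ^ k * f x

lemma momentTransform_zero (a : ℝ) (f : 𝓢(ℝ, ℂ)) :
    momentTransform a f 0 = transform a fun x => f x := by
  simp [momentTransform]

lemma hasDerivAt_momentTransform (ha : 0 ≤ a) (f : 𝓢(ℝ, ℂ)) (k : ℕ) (z : ℂ) :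
    HasDerivAt (momentTransform a f k)
      (a * momentTransform a f (k + 1) z - a / 2 * z * momentTransform a f k z) z := by
  have hshift :
      (fun x : ℝ => (x : ℂ) * ((x : ℂ) ^ k * f x)) = fun x : ℝ => (x : ℂ) ^ (k + 1) * f x := by
    ext x; ring
  have h := hasDerivAt_transform ha (f.integrable_ofReal_pow_mul k)
    (hshift ▸ f.integrable_ofReal_pow_mul (k + 1)) z
  rwa [hshift] at h

lemma transform_euler (ha : 0 ≤ a) (f : 𝓢(ℝ, ℂ)) (z : ℂ) :
    transform a (fun x => a * x * deriv (fun y => f y) x) z =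
      a ^ 2 * momentTransform a f 2 z - a ^ 2 * z * momentTransform a f 1 z -
        a * momentTransform a f 0 z := by
  set I : ℕ → ℝ → ℂ := fun k x => (x : ℂ) ^ k * f x * kernel a x z
  have hI (k : ℕ) : Integrable (I k) := integrable_mul_kernel ha (f.integrable_ofReal_pow_mul k) z
  have hv (x : ℝ) : HasDerivAt (fun y : ℝ => (y : ℂ) * kernel a y z)
      (kernel a x z + x * ((a * z - a * x) * kernel a x z)) x :=
    ((hasDerivAt_id x).ofReal_comp.mul (hasDerivAt_kernel_left a x z)).congr_deriv (by simp)
  have hf'v : Integrable fun x => deriv (fun y => f y) x * (x * kernel a x z) := by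
    refine (integrable_mul_kernel ha ((derivCLM ℝ ℂ f).integrable_ofReal_pow_mul 1) z).congr
      (ae_of_all _ fun x => ?_)
    simp only [derivCLM_apply, pow_one]; ring
  have hfv' : Integrable fun x => f x * (kernel a x z + x * ((a * z - a * x) * kernel a x z)) := by
    refine (((hI 0).add ((hI 1).const_mul (a * z))).sub ((hI 2).const_mul a)).congr
      (ae_of_all _ fun x => ?_)
    simp only [I, Pi.add_apply, Pi.sub_apply]; ring
  have hfv : Integrable fun x => f x * (x * kernel a x z) :=
    (hI 1).congr (ae_of_all _ fun x => by simp only [I]; ring)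
  have hparts := integral_mul_deriv_eq_deriv_mul_of_integrable
    (fun x _ => f.differentiableAt.hasDerivAt) (fun x _ => hv x) hfv' hf'v hfv
  calc transform a (fun x => a * x * deriv (fun y => f y) x) z
      = a * ∫ x, deriv (fun y => f y) x * (x * kernel a x z) := by
        rw [← integral_const_mul]; unfold transform; congr 1; ext x; ring
    _ = a * -∫ x, f x * (kernel a x z + x * ((a * z - a * x) * kernel a x z)) := by
        rw [hparts, neg_neg]
    _ = a * -∫ x, (I 0 x + (a * z) * I 1 x - a * I 2 x) := by
        congr 3; ext x; simp only [I]; ring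
    _ = a ^ 2 * momentTransform a f 2 z - a ^ 2 * z * momentTransform a f 1 z -
          a * momentTransform a f 0 z := by
        rw [integral_sub, integral_add, integral_const_mul, integral_const_mul]
        · simp only [momentTransform, transform, I]; ring
        · exact hI 0
        · exact (hI 1).const_mul _
        · exact (hI 0).add ((hI 1).const_mul _)
        · exact (hI 2).const_mul _

lemma bargmann_eq_transform (a : ℝ) (g : ℝ → ℂ) (z : ℂ) :
    bargmann a g z = ((a / Real.pi) ^ ((1 : ℝ) / 4) : ℝ) * transform a g z :=
  rfl

lemma hasDerivAt_bargmann (ha : 0 ≤ a) (f : 𝓢(ℝ, ℂ)) (z : ℂ) :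
    HasDerivAt (bargmann a fun x => f x)
      (((a / Real.pi) ^ ((1 : ℝ) / 4) : ℝ) *
        (a * momentTransform a f 1 z - a / 2 * z * momentTransform a f 0 z)) z := by
  have hB : (bargmann a fun x => f x) =
      fun w => ((a / Real.pi) ^ ((1 : ℝ) / 4) : ℝ) * momentTransform a f 0 w := by
    ext w; rw [bargmann_eq_transform, momentTransform_zero]
  rw [hB]
  exact (hasDerivAt_momentTransform ha f 0 z).const_mul _

lemma iteratedDeriv_two_bargmann (ha : 0 ≤ a) (f : 𝓢(ℝ, ℂ)) (z : ℂ) :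
    iteratedDeriv 2 (bargmann a fun x => f x) z =
      ((a / Real.pi) ^ ((1 : ℝ) / 4) : ℝ) *
        (a ^ 2 * momentTransform a f 2 z - a ^ 2 * z * momentTransform a f 1 z +
          (a ^ 2 * z ^ 2 / 4 - a / 2) * momentTransform a f 0 z) := by
  rw [iteratedDeriv_succ, iteratedDeriv_one, funext fun w => (hasDerivAt_bargmann ha f w).deriv]
  have h1 := hasDerivAt_momentTransform ha f 1 z
  have h0 := hasDerivAt_momentTransform ha f 0 z
  refine (((h1.const_mul (a : ℂ)).sub
    (((hasDerivAt_id z).const_mul ((a : ℂ) / 2)).mul h0)).const_mul _).deriv.trans ?_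
  simp only [id]; ring

end Bargmann

/-- [B_{a/2}(a x f')](z) = (B f)''(z) - (a^2 z^2 / 4)(B f)(z) - (a/2)(B f)(z) for Schwartz f:
the Bargmann transform intertwines the real Euler operator with the complex harmonic oscillator. -/
theorem bargmann_euler (a : ℝ) (ha : 0 < a) (f : SchwartzMap ℝ ℂ) (z : ℂ) :
    bargmann a (fun x : ℝ => (a : ℂ) * (x : ℂ) * deriv (fun y : ℝ => f y) x) z =
      iteratedDeriv 2 (bargmann a (fun x : ℝ => f x)) z
        - ((a : ℂ) ^ 2 * z ^ 2 / 4) * bargmann a (fun x : ℝ => f x) z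
        - ((a : ℂ) / 2) * bargmann a (fun x : ℝ => f x) z := by
  open Bargmann in
  rw [iteratedDeriv_two_bargmann ha.le, bargmann_eq_transform, bargmann_eq_transform,
    transform_euler ha.le, ← momentTransform_zero]
  ring
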